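/- arXiv:1710.04256 — 12 statements merged into one kernel-verified Lean document; each statement's English description precedes it below -/
import Mathlib

section
/- Let A be a generalized Heyting algebra satisfying the prelinearity law (a ⇨ b) ⊔ (b ⇨ a) = ⊤ for all a, b (i.e., A is a relative Stone algebra). Then for all a, b ∈ A, the following are equivalent: (1) a ⇨ b = b and b ⇨ a = a; (2) a ⊔ b = ⊤. -/
theorem stmt_0 {A : Type*} [GeneralizedHeytingAlgebra A]
    (prelin : ∀ a b : A, (a ⇨ b) ⊔ (b ⇨ a) = ⊤) :
    ∀ a b : A, (a ⇨ b = b ∧ b ⇨ a = a) ↔ a ⊔ b = ⊤ := by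
  intro a b
  constructor
  · rintro ⟨h1, h2⟩
    have : (b ⇨ a) ⊔ (a ⇨ b) = a ⊔ b := by rw [h1, h2]
    rw [← this, sup_comm]; exact prelin a b
  · intro h
    have key : ∀ x y : A, x ⊔ y = ⊤ → x ⇨ y = y := by
      intro x y hxy
      apply le_antisymm
      · calc x ⇨ y = (x ⇨ y) ⊓ (x ⊔ y) := by rw [hxy, inf_top_eq]
          _ = (x ⇨ y) ⊓ x ⊔ (x ⇨ y) ⊓ y := inf_sup_left _ _ _
          _ ≤ y ⊔ y := sup_le_sup (by rw [inf_comm]; exact inf_himp_le) inf_le_right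
          _ = y := sup_idem y
      · exact le_himp_iff.2 inf_le_left
    exact ⟨key a b h, key b a (by rw [sup_comm]; exact h)⟩
end

section
/- Let A be a generalized Heyting algebra satisfying the prelinearity law (a ⇨ b) ⊔ (b ⇨ a) = ⊤ for all a, b (i.e., A is a relative Stone algebra). Then for all a, b, c ∈ A, a ⇨ (b ⊔ c) = (a ⇨ b) ⊔ (a ⇨ c). -/
private lemma aux_sup_inf_himp {A : Type*} [GeneralizedHeytingAlgebra A] (b c : A) :
    (b ⊔ c) ⊓ (b ⇨ c) ≤ c := by
  rw [inf_sup_right]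
  exact sup_le (by rw [inf_comm]; exact himp_inf_le) inf_le_left

theorem stmt_3 {A : Type*} [GeneralizedHeytingAlgebra A]
    (prelin : ∀ a b : A, (a ⇨ b) ⊔ (b ⇨ a) = ⊤) :
    ∀ a b c : A, a ⇨ (b ⊔ c) = (a ⇨ b) ⊔ (a ⇨ c) := by
  intro a b c
  apply le_antisymm
  · have key : a ⇨ (b ⊔ c) = (a ⇨ (b ⊔ c)) ⊓ ((b ⇨ c) ⊔ (c ⇨ b)) := by
      rw [prelin, inf_top_eq]
    rw [key, inf_sup_left]
    apply sup_le
    · apply le_sup_of_le_right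
      rw [le_himp_iff]
      calc (a ⇨ (b ⊔ c)) ⊓ (b ⇨ c) ⊓ a ≤ (b ⊔ c) ⊓ (b ⇨ c) :=
            le_inf (le_trans (inf_le_inf_right a inf_le_left) himp_inf_le)
              (le_trans inf_le_left inf_le_right)
        _ ≤ c := aux_sup_inf_himp b c
    · apply le_sup_of_le_left
      rw [le_himp_iff]
      calc (a ⇨ (b ⊔ c)) ⊓ (c ⇨ b) ⊓ a ≤ (c ⊔ b) ⊓ (c ⇨ b) :=
            le_inf (le_trans (inf_le_inf_right a inf_le_left)
              (le_trans himp_inf_le (by rw [sup_comm])))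
              (le_trans inf_le_left inf_le_right)
        _ ≤ b := aux_sup_inf_himp c b
  · exact sup_le (himp_le_himp_left le_sup_left) (himp_le_himp_left le_sup_right)
end

section
/- Let A be a generalized Heyting algebra and f ∈ A a Boolean constant, i.e., a ⊔ (a ⇨ f) = ⊤ for all a. If a, b ∈ A satisfy a ⊔ b = ⊤ and f ⇨ b = b, then a ⊔ (b ⊓ (a ⇨ f)) = ⊤, a ⊓ b ⊓ (a ⇨ f) ≤ f, and f ⇨ (b ⊓ (a ⇨ f)) = b. (Surjectivity of the map δ(a,b) = (a, f ⇨ b) from A^⋈ = {(a,b) : a ⊔ b = ⊤, a ⊓ b ≤ f} onto Σ(A) = {(a,b) : a ⊔ b = ⊤, f ⇨ b = b}, with inverse (a,b) ↦ (a, b ⊓ (a ⇨ f)).) -/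
theorem stmt_7 {A : Type*} [GeneralizedHeytingAlgebra A] (f : A)
    (hf : ∀ x : A, x ⊔ (x ⇨ f) = ⊤)
    (a b : A) (hab : a ⊔ b = ⊤) (hb : f ⇨ b = b) :
    a ⊔ (b ⊓ (a ⇨ f)) = ⊤ ∧ a ⊓ b ⊓ (a ⇨ f) ≤ f ∧ f ⇨ (b ⊓ (a ⇨ f)) = b := by
  refine ⟨?_, ?_, ?_⟩
  · rw [sup_inf_left, hab, hf a, inf_idem]
  · calc a ⊓ b ⊓ (a ⇨ f) ≤ a ⊓ (a ⇨ f) := inf_le_inf inf_le_left le_rfl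
      _ ≤ f := inf_himp_le
  · rw [himp_inf_distrib, hb, himp_eq_top_iff.mpr (le_himp_iff.mpr inf_le_left), inf_top_eq]
end

section
/- Let A be a generalized Heyting algebra and f ∈ A a Boolean constant, i.e., x ⊔ (x ⇨ f) = ⊤ for all x. If a, b ∈ A satisfy a ⊔ b = ⊤ and a ⊓ b ≤ f, then (a ⇨ f) ⊓ (f ⇨ b) = b. -/
theorem stmt_8 {A : Type*} [GeneralizedHeytingAlgebra A] (f : A)
    (hf : ∀ x : A, x ⊔ (x ⇨ f) = ⊤)
    (a b : A) (hab : a ⊔ b = ⊤) (hab' : a ⊓ b ≤ f) :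
    (a ⇨ f) ⊓ (f ⇨ b) = b := by
  apply le_antisymm
  · set x := (a ⇨ f) ⊓ (f ⇨ b) with hx
    have h1 : x ⊓ a ≤ b := by
      have hxa : x ⊓ a ≤ f := le_himp_iff.mp inf_le_left
      calc x ⊓ a ≤ x ⊓ f := le_inf inf_le_left hxa
        _ ≤ b := le_himp_iff.mp inf_le_right
    have : x = (x ⊓ a) ⊔ (x ⊓ b) := by
      rw [← inf_sup_left, hab, inf_top_eq]
    rw [this]
    exact sup_le h1 inf_le_right
  · exact le_inf (le_himp_iff.mpr (by rw [inf_comm]; exact hab')) le_himp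
end

section
/- Let A be a generalized Heyting algebra and f ∈ A a Boolean constant, i.e., x ⊔ (x ⇨ f) = ⊤ for all x. If a, b ∈ A satisfy a ⊔ b = ⊤ and a ⊓ b ≤ f, then (a ⇨ f) ⊓ (f ⇨ b) = b and f ⇨ (((a ⇨ f) ⊓ (f ⇨ b)) ⇨ a) = f ⇨ a. (That is, the twist-product negation of the pair δ(a,b) = (a, f ⇨ b) equals δ(b,a) = (b, f ⇨ a), so the involution corresponds to coordinate swap.) -/
theorem stmt_9 {A : Type*} [GeneralizedHeytingAlgebra A] (f : A)
    (hf : ∀ x : A, x ⊔ (x ⇨ f) = ⊤)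
    (a b : A) (hab : a ⊔ b = ⊤) (hab' : a ⊓ b ≤ f) :
    (a ⇨ f) ⊓ (f ⇨ b) = b ∧ f ⇨ (((a ⇨ f) ⊓ (f ⇨ b)) ⇨ a) = f ⇨ a := by
  have h1 : (a ⇨ f) ⊓ (f ⇨ b) = b := by
    apply le_antisymm
    · set x := (a ⇨ f) ⊓ (f ⇨ b) with hx
      have : x = (x ⊓ a) ⊔ (x ⊓ b) := by rw [← inf_sup_left, hab, inf_top_eq]
      rw [this]
      apply sup_le _ inf_le_right
      have hxa : x ⊓ a ≤ f := le_trans (inf_le_inf_right a inf_le_left) (by simp)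
      have hxf : x ⊓ f ≤ b := le_trans (inf_le_inf_right f inf_le_right) (by simp)
      exact le_trans (le_inf inf_le_left hxa) hxf
    · exact le_inf (le_himp_iff.2 (by rw [inf_comm]; exact hab')) le_himp
  refine ⟨h1, ?_⟩
  rw [h1, himp_himp]
  apply le_antisymm
  · rw [le_himp_iff]
    have : (f ⊓ b ⇨ a) ⊓ f = ((f ⊓ b ⇨ a) ⊓ f ⊓ a) ⊔ ((f ⊓ b ⇨ a) ⊓ f ⊓ b) := by
      rw [← inf_sup_left, hab, inf_top_eq]
    rw [this]
    exact sup_le inf_le_right (by rw [inf_assoc]; exact himp_inf_le)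
  · exact himp_le_himp_right inf_le_left
end

section
/- Let A be a generalized Heyting algebra and f ∈ A a Boolean constant, i.e., a ⊔ (a ⇨ f) = ⊤ for all a. Let x, y ⊆ A be such that x is a prime filter (x is upward closed, closed under binary meets, ⊤ ∈ x, and a ⊔ b ∈ x implies a ∈ x or b ∈ x), y is upward closed and closed under binary meets, f ∉ y, and x ⊆ y. Then y ⊆ x (hence x = y; every prime filter avoiding f is maximal among filters avoiding f, so the points of the dual space outside σ(f) are minimal). -/
theorem stmt_10 {A : Type*} [GeneralizedHeytingAlgebra A] (f : A)
    (hf : ∀ a : A, a ⊔ (a ⇨ f) = ⊤)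
    (x y : Set A)
    (hxup : ∀ a b : A, a ∈ x → a ≤ b → b ∈ x)
    (hxmeet : ∀ a b : A, a ∈ x → b ∈ x → a ⊓ b ∈ x)
    (hxtop : (⊤ : A) ∈ x)
    (hxprime : ∀ a b : A, a ⊔ b ∈ x → a ∈ x ∨ b ∈ x)
    (hyup : ∀ a b : A, a ∈ y → a ≤ b → b ∈ y)
    (hymeet : ∀ a b : A, a ∈ y → b ∈ y → a ⊓ b ∈ y)
    (hfy : f ∉ y)
    (hxy : x ⊆ y) :
    y ⊆ x := by
  intro a ha
  have h := hxprime a (a ⇨ f) (by rw [hf a]; exact hxtop)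
  rcases h with h | h
  · exact h
  · exact absurd (hyup _ _ (hymeet _ _ ha (hxy h)) inf_himp_le) hfy
end

section
/- Let A be a generalized Heyting algebra satisfying the prelinearity law (a ⇨ b) ⊔ (b ⇨ a) = ⊤ for all a, b (i.e., A is a relative Stone algebra), let f ∈ A, and let x ⊆ A be a prime filter (upward closed, closed under binary meets, ⊤ ∈ x, and a ⊔ b ∈ x implies a ∈ x or b ∈ x). Then the set x⁻¹ = {a ∈ A : f ⇨ a ∈ x} is upward closed, closed under binary meets, contains ⊤, and satisfies: a ⊔ b ∈ x⁻¹ implies a ∈ x⁻¹ or b ∈ x⁻¹. -/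
theorem stmt_11 {A : Type*} [GeneralizedHeytingAlgebra A]
    (prelin : ∀ a b : A, (a ⇨ b) ⊔ (b ⇨ a) = ⊤)
    (f : A) (x : Set A)
    (hxup : ∀ a b : A, a ∈ x → a ≤ b → b ∈ x)
    (hxmeet : ∀ a b : A, a ∈ x → b ∈ x → a ⊓ b ∈ x)
    (hxtop : (⊤ : A) ∈ x)
    (hxprime : ∀ a b : A, a ⊔ b ∈ x → a ∈ x ∨ b ∈ x) :
    (∀ a b : A, a ∈ {a : A | f ⇨ a ∈ x} → a ≤ b → b ∈ {a : A | f ⇨ a ∈ x}) ∧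
    (∀ a b : A, a ∈ {a : A | f ⇨ a ∈ x} → b ∈ {a : A | f ⇨ a ∈ x} →
      a ⊓ b ∈ {a : A | f ⇨ a ∈ x}) ∧
    (⊤ : A) ∈ {a : A | f ⇨ a ∈ x} ∧
    (∀ a b : A, a ⊔ b ∈ {a : A | f ⇨ a ∈ x} →
      a ∈ {a : A | f ⇨ a ∈ x} ∨ b ∈ {a : A | f ⇨ a ∈ x}) := by
  have key : ∀ a b : A, a ⇨ b ∈ x → f ⇨ (a ⊔ b) ∈ x → f ⇨ b ∈ x := by
    intro a b hab hsup
    have h1 : f ⇨ (a ⇨ b) ∈ x := hxup _ _ hab (le_himp_iff.2 inf_le_left)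
    have h2 : f ⇨ ((a ⇨ b) ⊓ (a ⊔ b)) ∈ x := by
      rw [himp_inf_distrib]; exact hxmeet _ _ h1 hsup
    refine hxup _ _ h2 (himp_le_himp_left ?_)
    rw [inf_sup_left]
    exact sup_le himp_inf_le inf_le_right
  refine ⟨fun a b ha hab => hxup _ _ ha (himp_le_himp_left hab),
    fun a b ha hb => by rw [Set.mem_setOf_eq, himp_inf_distrib]; exact hxmeet _ _ ha hb,
    by simp [Set.mem_setOf_eq, hxtop],
    fun a b hab => ?_⟩
  have := hxprime _ _ (by rw [prelin a b]; exact hxtop)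
  rcases this with h | h
  · exact Or.inr (key a b h hab)
  · exact Or.inl (key b a h (by rwa [sup_comm]))
end

section
/- Let A be a generalized Heyting algebra and f ∈ A a Boolean constant, i.e., a ⊔ (a ⇨ f) = ⊤ for all a. Let x, y ⊆ A be prime filters (upward closed, closed under binary meets, containing ⊤, and a ⊔ b ∈ · implies a ∈ · or b ∈ ·). Then {a ∈ A : f ⇨ a ∈ x} ⊆ y if and only if x ⊆ y and (x = y implies f ∈ y). (The nuclear accessibility relation R on prime filters coincides with the relation ≲ obtained from inclusion by removing the reflexive pairs at points not containing f.) -/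
theorem stmt_12 {A : Type*} [GeneralizedHeytingAlgebra A] (f : A)
    (hf : ∀ a : A, a ⊔ (a ⇨ f) = ⊤)
    (x y : Set A)
    (hxup : ∀ a b : A, a ∈ x → a ≤ b → b ∈ x)
    (hxmeet : ∀ a b : A, a ∈ x → b ∈ x → a ⊓ b ∈ x)
    (hxtop : (⊤ : A) ∈ x)
    (hxprime : ∀ a b : A, a ⊔ b ∈ x → a ∈ x ∨ b ∈ x)
    (hyup : ∀ a b : A, a ∈ y → a ≤ b → b ∈ y)
    (hymeet : ∀ a b : A, a ∈ y → b ∈ y → a ⊓ b ∈ y)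
    (hytop : (⊤ : A) ∈ y)
    (hyprime : ∀ a b : A, a ⊔ b ∈ y → a ∈ y ∨ b ∈ y) :
    {a : A | f ⇨ a ∈ x} ⊆ y ↔ (x ⊆ y ∧ (x = y → f ∈ y)) := by
  constructor
  · intro h
    refine ⟨fun a ha => h (hxup a (f ⇨ a) ha le_himp), fun _ => ?_⟩
    have : f ⇨ f ∈ x := by simpa [himp_self] using hxtop
    exact h this
  · rintro ⟨hxy, hef⟩ a ha
    have hfy : f ∈ y := by
      by_cases hxey : x = y
      · exact hef hxey
      · obtain ⟨b, hby, hbx⟩ : ∃ b, b ∈ y ∧ b ∉ x := by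
          by_contra hc
          push_neg at hc
          exact hxey (Set.Subset.antisymm hxy hc)
        have : b ⊔ (b ⇨ f) ∈ x := by rw [hf]; exact hxtop
        rcases hxprime _ _ this with h1 | h2
        · exact absurd h1 hbx
        · exact hyup _ _ (hymeet _ _ hby (hxy h2)) (by
            calc b ⊓ (b ⇨ f) ≤ f := inf_himp_le)
    have := hymeet _ _ hfy (hxy ha)
    exact hyup _ _ this inf_himp_le
end

section
/- Let (X, ≤) be a partially ordered set and D ⊆ X. Suppose the comparability relation Q (where Q x y iff x ≤ y or y ≤ x) satisfies: (i) for all x, y, if Q x y and x ∈ D then x ≤ y; and (ii) for all x, y, z, if Q x y and y ≤ z then Q z x. Then every element of D is ≤-minimal (for all d ∈ D and y ∈ X, y ≤ d implies y = d), and (X, ≤) is a forest (for all x, y, z, x ≤ y and x ≤ z imply y ≤ z or z ≤ y). -/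
theorem stmt_14 {X : Type*} [PartialOrder X] (D : Set X)
    (h1 : ∀ x y : X, (x ≤ y ∨ y ≤ x) → x ∈ D → x ≤ y)
    (h2 : ∀ x y z : X, (x ≤ y ∨ y ≤ x) → y ≤ z → (z ≤ x ∨ x ≤ z)) :
    (∀ d ∈ D, ∀ y : X, y ≤ d → y = d) ∧
    (∀ x y z : X, x ≤ y → x ≤ z → y ≤ z ∨ z ≤ y) := by
  constructor
  · intro d hd y hyd
    exact le_antisymm hyd (h1 d y (Or.inr hyd) hd)
  · intro x y z hxy hxz
    exact h2 z x y (Or.inr hxz) hxy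
end

section
/- Let A be a lattice equipped with a map n : A → A satisfying n(n a) = a for all a and a ≤ b implies n b ≤ n a, and let t ∈ A satisfy n t ≤ t, a ⊓ n a ≤ n t for all a, and t ≤ a ⊔ n a for all a (these identities hold in every Sugihara monoid). Let x ⊆ A be a prime filter (upward closed, closed under binary meets, and a ⊔ b ∈ x implies a ∈ x or b ∈ x), and let x' = {a ∈ A : n a ∉ x}. Then x ⊆ x' or x' ⊆ x. -/
theorem stmt_16 {A : Type*} [Lattice A] (n : A → A)
    (hinv : ∀ a : A, n (n a) = a)
    (hanti : ∀ a b : A, a ≤ b → n b ≤ n a)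
    (t : A) (hnt : n t ≤ t)
    (hmeet : ∀ a : A, a ⊓ n a ≤ n t)
    (hjoin : ∀ a : A, t ≤ a ⊔ n a)
    (x : Set A)
    (hxup : ∀ a b : A, a ∈ x → a ≤ b → b ∈ x)
    (hxmeet : ∀ a b : A, a ∈ x → b ∈ x → a ⊓ b ∈ x)
    (hxprime : ∀ a b : A, a ⊔ b ∈ x → a ∈ x ∨ b ∈ x) :
    x ⊆ {a : A | n a ∉ x} ∨ {a : A | n a ∉ x} ⊆ x := by
  by_cases ht : t ∈ x
  · right
    intro a ha
    rcases hxprime a (n a) (hxup t _ ht (hjoin a)) with h | h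
    · exact h
    · exact absurd h ha
  · left
    intro a ha hna
    exact ht (hxup _ _ (hxmeet a (n a) ha hna) ((hmeet a).trans hnt))
end

section
/- Let A be a lattice equipped with a map n : A → A satisfying n(n a) = a for all a and a ≤ b implies n b ≤ n a, and let t ∈ A satisfy n t ≤ t, a ⊓ n a ≤ n t for all a, and t ≤ a ⊔ n a for all a (these identities hold in every Sugihara monoid). Let x ⊆ A be a prime filter (upward closed, closed under binary meets, and a ⊔ b ∈ x implies a ∈ x or b ∈ x), and let x' = {a ∈ A : n a ∉ x}. Then x = x' if and only if t ∈ x and n t ∉ x. -/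
theorem stmt_17 {A : Type*} [Lattice A] (n : A → A)
    (hinv : ∀ a : A, n (n a) = a)
    (hanti : ∀ a b : A, a ≤ b → n b ≤ n a)
    (t : A) (hnt : n t ≤ t)
    (hmeet : ∀ a : A, a ⊓ n a ≤ n t)
    (hjoin : ∀ a : A, t ≤ a ⊔ n a)
    (x : Set A)
    (hxup : ∀ a b : A, a ∈ x → a ≤ b → b ∈ x)
    (hxmeet : ∀ a b : A, a ∈ x → b ∈ x → a ⊓ b ∈ x)
    (hxprime : ∀ a b : A, a ⊔ b ∈ x → a ∈ x ∨ b ∈ x) :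
    x = {a : A | n a ∉ x} ↔ (t ∈ x ∧ n t ∉ x) := by
  constructor
  · intro h
    have ht : t ∈ x := by
      by_contra htx
      have : t ∈ {a : A | n a ∉ x} → t ∈ x := fun h' => h ▸ h'
      have hnt' : n t ∈ x := by
        by_contra hc
        exact htx (this hc)
      exact htx (hxup _ _ hnt' hnt)
    refine ⟨ht, ?_⟩
    have : t ∈ {a : A | n a ∉ x} := h ▸ ht
    exact this
  · rintro ⟨ht, hntx⟩
    ext a
    constructor
    · intro ha hna
      exact hntx (hxup _ _ (hxmeet _ _ ha hna) (hmeet a))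
    · intro hna
      rcases hxprime a (n a) (hxup _ _ ht (hjoin a)) with h | h
      · exact h
      · exact absurd h hna
end

section
/- Let A be a lattice equipped with a commutative monoid operation · (with identity t) and a binary operation ⇨ satisfying the residuation law a · b ≤ c ↔ a ≤ b ⇨ c for all a, b, c, and suppose A satisfies the identity a ⇨ (b ⊔ c) = (a ⇨ b) ⊔ (a ⇨ c) for all a, b, c (which holds in every semilinear commutative residuated lattice). Let x ⊆ A be any subset and let y ⊆ A be upward closed and prime (a ⊔ b ∈ y implies a ∈ y or b ∈ y). Then the complex product x · y = {c ∈ A : there exist a ∈ x and b ∈ y with a · b ≤ c} is prime: for all a, b ∈ A, if a ⊔ b ∈ x · y then a ∈ x · y or b ∈ x · y. -/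
theorem stmt_19 {A : Type*} [Lattice A]
    (mul : A → A → A) (himp : A → A → A) (t : A)
    (hcomm : ∀ a b : A, mul a b = mul b a)
    (hassoc : ∀ a b c : A, mul (mul a b) c = mul a (mul b c))
    (hident : ∀ a : A, mul a t = a)
    (hres : ∀ a b c : A, mul a b ≤ c ↔ a ≤ himp b c)
    (hdist : ∀ a b c : A, himp a (b ⊔ c) = himp a b ⊔ himp a c)
    (x y : Set A)
    (hyup : ∀ a b : A, a ∈ y → a ≤ b → b ∈ y)
    (hyprime : ∀ a b : A, a ⊔ b ∈ y → a ∈ y ∨ b ∈ y) :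
    ∀ a b : A, a ⊔ b ∈ {c : A | ∃ p ∈ x, ∃ q ∈ y, mul p q ≤ c} →
      a ∈ {c : A | ∃ p ∈ x, ∃ q ∈ y, mul p q ≤ c} ∨
      b ∈ {c : A | ∃ p ∈ x, ∃ q ∈ y, mul p q ≤ c} := by
  rintro a b ⟨p, hp, q, hq, hpq⟩
  have hq' : q ≤ himp p a ⊔ himp p b := by
    rw [← hdist, ← hres, hcomm]; exact hpq
  have hmem : himp p a ⊔ himp p b ∈ y := hyup _ _ hq hq'
  have hback : ∀ c : A, mul p (himp p c) ≤ c := fun c => by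
    rw [hcomm]; exact (hres _ _ _).mpr le_rfl
  rcases hyprime _ _ hmem with h | h
  · exact Or.inl ⟨p, hp, himp p a, h, hback a⟩
  · exact Or.inr ⟨p, hp, himp p b, h, hback b⟩
end
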